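/- arXiv:math/0605014 — 4 statements merged into one kernel-verified Lean document; each statement's English description precedes it below -/
import Mathlib

section
/- Let n ≥ 2 be an integer, and let f, g: [0,∞) → [0,∞) be continuous, log-concave functions, C²-smooth on (0,∞), such that f(0) > 0, g(0) > 0, ∫₀^∞ f < ∞ and ∫₀^∞ g < ∞. Assume that for all t ≥ 0, |f(t) − g(t)| ≤ e^{−5n} min{f(0), g(0)}. Then (1 − e^{−n}) t_n(g) ≤ t_n(f) ≤ (1 + e^{−n}) t_n(g). -/
open MeasureTheory Real Set Filter
open scoped ENNReal NNReal

noncomputable section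

/-- A function `f : [0,∞) → [0,∞)` is log-concave. -/
def LogConcaveOnNonneg (f : ℝ → ℝ) : Prop :=
  ∀ x : ℝ, 0 ≤ x → ∀ y : ℝ, 0 ≤ y → ∀ l : ℝ, 0 < l → l < 1 →
    f x ^ l * f y ^ (1 - l) ≤ f (l * x + (1 - l) * y)

/-- `t` is the point `t_p(f)`: the (unique) `t > 0` with `f(t) > 0` and
`f′(t)/f(t) = −(p−1)/t`. -/
def IsTp (p : ℝ) (f : ℝ → ℝ) (t : ℝ) : Prop :=
  0 < t ∧ 0 < f t ∧ derivWithin f (Set.Ioi 0) t / f t = -(p - 1) / t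

theorem one_add_mul_exp_neg_le {ε : ℝ} (h₀ : 0 ≤ ε) (h₁ : ε ≤ 1) :
    (1 + ε) * exp (-ε) ≤ 1 - ε ^ 2 / 5 := by
  rw [exp_neg, ← div_eq_mul_inv, div_le_iff₀ (exp_pos ε)]
  have hq := mul_le_mul_of_nonneg_left (quadratic_le_exp_of_nonneg h₀)
    (by nlinarith : 0 ≤ 1 - ε ^ 2 / 5)
  nlinarith [mul_nonneg (mul_nonneg h₀ h₀) h₀, mul_nonneg (mul_nonneg h₀ h₀) (sub_nonneg.2 h₁)]

theorem one_add_exp_neg_rpow_mul_add_lt_sub {p m G : ℝ} (hp : 2 ≤ p) (hm : 0 < m)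
    (hG : exp (-(p - 1)) * m ≤ G) :
    (1 + exp (-p)) ^ (p - 1) * (exp (-(p - 1) * exp (-p)) * G + exp (-(5 * p)) * m) <
      G - exp (-(5 * p)) * m := by
  by_contra! hcomp
  set ε := exp (-p)
  set δ := exp (-(5 * p)) * m
  have hε₁ : ε ≤ 1 := exp_le_one_iff.2 (by linarith)
  have hcontract : (1 + ε) ^ (p - 1) * exp (-(p - 1) * ε) ≤ 1 - ε ^ 2 / 5 := by
    have hbase := one_add_mul_exp_neg_le (exp_pos _).le hε₁
    rw [show -(p - 1) * ε = -ε * (p - 1) by ring, exp_mul,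
      ← mul_rpow (by positivity) (exp_pos _).le]
    exact (rpow_le_self_of_le_one (by positivity) (hbase.trans (by nlinarith)) (by linarith)).trans
      hbase
  have hgrowth : (1 + ε) ^ (p - 1) ≤ exp (p - 1) := by
    rw [← exp_one_rpow]
    exact rpow_le_rpow (by positivity) (by linarith [add_one_le_exp ε, exp_le_exp.2 hε₁])
      (by linarith)
  have hδ : δ ≤ exp (-(4 * p + 1)) * G := by
    calc δ = exp (-(5 * p)) * m := rfl
      _ = exp (-(4 * p + 1)) * (exp (-(p - 1)) * m) := by
          rw [← mul_assoc, ← exp_add]; ring_nf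
      _ ≤ exp (-(4 * p + 1)) * G := by gcongr
  have hG₀ : 0 < G := (mul_pos (exp_pos _) hm).trans_le hG
  have hsmall : ε ^ 2 / 5 * G ≤ 2 * exp (-(3 * p + 2)) * G := by
    have hδ₀ : 0 ≤ δ := by positivity
    have h1 : 1 ≤ exp (p - 1) := one_le_exp (by linarith)
    calc ε ^ 2 / 5 * G ≤ 2 * exp (p - 1) * δ := by
          nlinarith [mul_le_mul_of_nonneg_right hcontract hG₀.le,
            mul_le_mul_of_nonneg_right hgrowth hδ₀]
      _ ≤ 2 * exp (p - 1) * (exp (-(4 * p + 1)) * G) := by gcongr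
      _ = 2 * exp (-(3 * p + 2)) * G := by
          rw [← mul_assoc, mul_assoc 2, ← exp_add]; ring_nf
  have hbound : exp (p + 2) ≤ 10 := by
    have hε2 : exp (p + 2) * exp (-(3 * p + 2)) = ε ^ 2 := by
      rw [← exp_add, sq, ← exp_add]; ring_nf
    have := le_of_mul_le_mul_right hsmall hG₀
    exact le_of_mul_le_mul_right (by linarith) (exp_pos (-(3 * p + 2)))
  have h13 : 13 ≤ exp (p + 2) := by
    have := quadratic_le_exp_of_nonneg (x := p + 2) (by linarith)
    nlinarith
  linarith

theorem logConcaveOnNonneg_rpow {q : ℝ} (hq : 0 ≤ q) : LogConcaveOnNonneg (· ^ q) := by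
  intro x hx y hy l hl₀ hl₁
  rw [← rpow_mul hx, mul_comm q, rpow_mul hx, ← rpow_mul hy, mul_comm q, rpow_mul hy,
    ← mul_rpow (by positivity) (by positivity)]
  refine rpow_le_rpow (by positivity) ?_ hq
  exact geom_mean_le_arith_mean2_weighted hl₀.le (by linarith) hx hy (by ring)

namespace LogConcaveOnNonneg

variable {f g : ℝ → ℝ}

theorem mul (hf : LogConcaveOnNonneg f) (hg : LogConcaveOnNonneg g)
    (hf₀ : ∀ x, 0 ≤ x → 0 ≤ f x) (hg₀ : ∀ x, 0 ≤ x → 0 ≤ g x) :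
    LogConcaveOnNonneg (fun x => f x * g x) := by
  intro x hx y hy l hl₀ hl₁
  rw [mul_rpow (hf₀ x hx) (hg₀ x hx), mul_rpow (hf₀ y hy) (hg₀ y hy),
    mul_mul_mul_comm]
  exact mul_le_mul (hf x hx y hy l hl₀ hl₁) (hg x hx y hy l hl₀ hl₁)
    (mul_nonneg (rpow_nonneg (hg₀ x hx) _) (rpow_nonneg (hg₀ y hy) _))
    (hf₀ _ (add_nonneg (mul_nonneg hl₀.le hx) (mul_nonneg (by linarith) hy)))

theorem min_le {F : ℝ → ℝ} (hF : LogConcaveOnNonneg F) {a b c : ℝ} (ha : 0 ≤ a)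
    (hac : a ≤ c) (hcb : c ≤ b) (hFa : 0 ≤ F a) (hFb : 0 ≤ F b) :
    min (F a) (F b) ≤ F c := by
  rcases hac.eq_or_lt with rfl | hac
  · exact min_le_left _ _
  rcases hcb.eq_or_lt with rfl | hcb
  · exact min_le_right _ _
  set l := (b - c) / (b - a)
  have hba : 0 < b - a := by linarith
  have hl₀ : 0 < l := div_pos (by linarith) hba
  have hl₁ : l < 1 := (div_lt_one hba).2 (by linarith)
  have hc : l * a + (1 - l) * b = c := by simp only [l]; field_simp; ring
  have hm : 0 ≤ min (F a) (F b) := le_min hFa hFb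
  calc min (F a) (F b) = min (F a) (F b) ^ l * min (F a) (F b) ^ (1 - l) := by
        rw [← rpow_add' hm (by simp), add_sub_cancel, rpow_one]
    _ ≤ F a ^ l * F b ^ (1 - l) := by
        gcongr
        exacts [min_le_left _ _, min_le_right _ _]
    _ ≤ F c := hc ▸ hF a ha b (by linarith) l hl₀ hl₁

theorem le_mul_exp_of_hasDerivAt (hf : LogConcaveOnNonneg f) {t r f' : ℝ} (ht : 0 ≤ t)
    (hr : 0 ≤ r) (hft : 0 < f t) (hd : HasDerivAt f f' t) :
    f r ≤ f t * exp (f' / f t * (r - t)) := by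
  rcases le_or_gt (f r) 0 with hfr | hfr
  · exact hfr.trans (by positivity)
  set φ : ℝ → ℝ := fun l => log (f (t + l * (r - t)))
  have hφ : HasDerivAt φ (f' / f t * (r - t)) 0 := by
    have hline : HasDerivAt (fun l : ℝ => t + l * (r - t)) (r - t) 0 := by
      simpa using ((hasDerivAt_id (0 : ℝ)).mul_const (r - t)).const_add t
    have := (HasDerivAt.comp_of_eq 0 hd hline (by simp)).log (by simpa using hft.ne')
    simpa [φ, div_mul_eq_mul_div] using this
  have hchord : ∀ l ∈ Ioo (0 : ℝ) 1, log (f r) - log (f t) ≤ l⁻¹ • (φ (0 + l) - φ 0) := by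
    rintro l ⟨hl₀, hl₁⟩
    have hlc := hf r hr t ht l hl₀ hl₁
    rw [show l * r + (1 - l) * t = t + l * (r - t) by ring] at hlc
    have hlog := log_le_log (by positivity) hlc
    rw [log_mul (by positivity) (by positivity), log_rpow hfr, log_rpow hft] at hlog
    simp only [φ, zero_add, zero_mul, add_zero, smul_eq_mul]
    rw [le_inv_mul_iff₀ hl₀]
    linarith
  have hslope : log (f r) - log (f t) ≤ f' / f t * (r - t) :=
    ge_of_tendsto hφ.tendsto_slope_zero_right
      (eventually_of_mem (Ioo_mem_nhdsGT one_pos) hchord)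
  calc f r = exp (log (f r)) := (exp_log hfr).symm
    _ ≤ exp (log (f t) + f' / f t * (r - t)) := exp_le_exp.2 (by linarith)
    _ = f t * exp (f' / f t * (r - t)) := by rw [exp_add, exp_log hft]

end LogConcaveOnNonneg

namespace IsTp

variable {p t : ℝ} {f : ℝ → ℝ}

theorem hasDerivAt (h : IsTp p f t) (hd : DifferentiableOn ℝ f (Ioi 0)) :
    HasDerivAt f (-(p - 1) / t * f t) t := by
  obtain ⟨ht, hft, hlog⟩ := h
  have hf' := (hd.differentiableAt (Ioi_mem_nhds ht)).hasDerivAt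
  rw [derivWithin_of_isOpen isOpen_Ioi ht, div_eq_iff hft.ne'] at hlog
  rwa [← hlog]

theorem le_mul_exp (h : IsTp p f t) (hf : LogConcaveOnNonneg f)
    (hd : DifferentiableOn ℝ f (Ioi 0)) {r : ℝ} (hr : 0 ≤ r) :
    f r ≤ f t * exp (-(p - 1) * (r / t - 1)) := by
  have := hf.le_mul_exp_of_hasDerivAt h.1.le hr h.2.1 (h.hasDerivAt hd)
  convert this using 3
  field_simp [h.1.ne', h.2.1.ne']

theorem rpow_mul_le (h : IsTp p f t) (hf : LogConcaveOnNonneg f)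
    (hd : DifferentiableOn ℝ f (Ioi 0)) (hp : 1 ≤ p) {r : ℝ} (hr : 0 ≤ r) :
    r ^ (p - 1) * f r ≤ t ^ (p - 1) * f t := by
  have ht := h.1
  have hx : (r / t) ^ (p - 1) ≤ exp ((p - 1) * (r / t - 1)) := by
    rw [mul_comm, exp_mul]
    refine rpow_le_rpow (by positivity) ?_ (by linarith)
    linarith [add_one_le_exp (r / t - 1)]
  calc r ^ (p - 1) * f r
      ≤ (r / t) ^ (p - 1) * t ^ (p - 1) * (f t * exp (-(p - 1) * (r / t - 1))) := by
        rw [div_rpow hr ht.le, div_mul_cancel₀ _ (rpow_pos_of_pos ht _).ne']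
        exact mul_le_mul_of_nonneg_left (h.le_mul_exp hf hd hr) (by positivity)
    _ ≤ exp ((p - 1) * (r / t - 1)) * t ^ (p - 1) * (f t * exp (-(p - 1) * (r / t - 1))) := by
        have hft := h.2.1
        gcongr
    _ = t ^ (p - 1) * f t := by
        rw [neg_mul, exp_neg]
        field_simp

theorem monotoneOn_rpow_mul (h : IsTp p f t) (hf : LogConcaveOnNonneg f)
    (hf₀ : ∀ x, 0 ≤ x → 0 ≤ f x) (hd : DifferentiableOn ℝ f (Ioi 0)) (hp : 1 ≤ p) :
    MonotoneOn (fun r => r ^ (p - 1) * f r) (Icc 0 t) := by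
  rintro s ⟨hs, -⟩ r ⟨-, hrt⟩ hsr
  have hF : LogConcaveOnNonneg (fun r => r ^ (p - 1) * f r) :=
    (logConcaveOnNonneg_rpow (by linarith)).mul hf (fun x hx => rpow_nonneg hx _) hf₀
  have hmin := hF.min_le hs hsr hrt (mul_nonneg (rpow_nonneg hs _) (hf₀ s hs))
    (mul_nonneg (rpow_nonneg h.1.le _) (hf₀ t h.1.le))
  rwa [min_eq_left (h.rpow_mul_le hf hd hp hs)] at hmin

theorem sub_le_of_one_add_mul_le {p tf tg δ ε : ℝ} {f g : ℝ → ℝ} (htf : IsTp p f tf)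
    (htg : IsTp p g tg) (hp : 1 ≤ p) (hf : LogConcaveOnNonneg f)
    (hf₀ : ∀ x, 0 ≤ x → 0 ≤ f x) (hfd : DifferentiableOn ℝ f (Ioi 0))
    (hg : LogConcaveOnNonneg g) (hgd : DifferentiableOn ℝ g (Ioi 0))
    (hclose : ∀ t, 0 ≤ t → |f t - g t| ≤ δ) (hε : 0 ≤ ε) (hle : (1 + ε) * tg ≤ tf) :
    g tg - δ ≤ (1 + ε) ^ (p - 1) * (exp (-(p - 1) * ε) * g tg + δ) := by
  have htg₀ := htg.1
  set t' := (1 + ε) * tg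
  have htgt' : tg ≤ t' := le_mul_of_one_le_left htg₀.le (by linarith)
  have hmono : tg ^ (p - 1) * f tg ≤ t' ^ (p - 1) * f t' :=
    htf.monotoneOn_rpow_mul hf hf₀ hfd hp ⟨htg₀.le, htgt'.trans hle⟩
      ⟨htg₀.le.trans htgt', hle⟩ htgt'
  have hdecay : g t' ≤ g tg * exp (-(p - 1) * ε) := by
    have := htg.le_mul_exp hg hgd (r := t') (by positivity)
    rwa [mul_div_cancel_right₀ _ htg₀.ne', add_sub_cancel_left] at this
  have hftg : g tg - δ ≤ f tg := by
    linarith [(abs_le.1 (hclose tg htg₀.le)).1]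
  have hft' : f t' ≤ g t' + δ := by
    linarith [(abs_le.1 (hclose t' (by positivity))).2]
  refine le_of_mul_le_mul_left ?_ (rpow_pos_of_pos htg₀ (p - 1))
  calc tg ^ (p - 1) * (g tg - δ) ≤ tg ^ (p - 1) * f tg := by gcongr
    _ ≤ t' ^ (p - 1) * f t' := hmono
    _ ≤ t' ^ (p - 1) * (exp (-(p - 1) * ε) * g tg + δ) := by
        gcongr
        linarith
    _ = tg ^ (p - 1) * ((1 + ε) ^ (p - 1) * (exp (-(p - 1) * ε) * g tg + δ)) := by
        rw [mul_rpow (by linarith) htg₀.le]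
        ring

theorem le_one_add_exp_neg_mul {p tf tg m : ℝ} {f g : ℝ → ℝ} (htf : IsTp p f tf)
    (htg : IsTp p g tg) (hp : 2 ≤ p) (hf : LogConcaveOnNonneg f)
    (hf₀ : ∀ x, 0 ≤ x → 0 ≤ f x) (hfd : DifferentiableOn ℝ f (Ioi 0))
    (hg : LogConcaveOnNonneg g) (hgd : DifferentiableOn ℝ g (Ioi 0)) (hm : 0 < m)
    (hmg : m ≤ g 0) (hclose : ∀ t, 0 ≤ t → |f t - g t| ≤ exp (-(5 * p)) * m) :
    tf ≤ (1 + exp (-p)) * tg := by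
  by_contra! hlt
  have hG : exp (-(p - 1)) * m ≤ g tg := by
    have := htg.le_mul_exp hg hgd le_rfl
    rw [zero_div, zero_sub, mul_neg_one, neg_neg] at this
    rw [exp_neg, inv_mul_le_iff₀ (exp_pos _), mul_comm]
    exact hmg.trans this
  exact (one_add_exp_neg_rpow_mul_add_lt_sub hp hm hG).not_ge
    (htf.sub_le_of_one_add_mul_le htg (by linarith) hf hf₀ hfd hg hgd hclose
      (exp_pos _).le hlt.le)

end IsTp

theorem tn_stability_general
    (n : ℕ) (hn : 2 ≤ n) (f g : ℝ → ℝ)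
    (hf_nonneg : ∀ t : ℝ, 0 ≤ t → 0 ≤ f t) (hg_nonneg : ∀ t : ℝ, 0 ≤ t → 0 ≤ g t)
    (hf_smooth : ContDiffOn ℝ 2 f (Set.Ioi 0)) (hg_smooth : ContDiffOn ℝ 2 g (Set.Ioi 0))
    (hf_lc : LogConcaveOnNonneg f) (hg_lc : LogConcaveOnNonneg g)
    (hf0 : 0 < f 0) (hg0 : 0 < g 0)
    (hclose : ∀ t : ℝ, 0 ≤ t → |f t - g t| ≤ Real.exp (-(5 * n)) * min (f 0) (g 0)) :
    ∀ tf tg : ℝ, IsTp n f tf → IsTp n g tg →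
      (1 - Real.exp (-(n : ℝ))) * tg ≤ tf ∧ tf ≤ (1 + Real.exp (-(n : ℝ))) * tg := by
  intro tf tg htf htg
  have hn' : (2 : ℝ) ≤ n := by exact_mod_cast hn
  have hfd := hf_smooth.differentiableOn two_ne_zero
  have hgd := hg_smooth.differentiableOn two_ne_zero
  have hm := lt_min hf0 hg0
  have hupper := htf.le_one_add_exp_neg_mul htg hn' hf_lc hf_nonneg hfd hg_lc hgd hm
    (min_le_right _ _) hclose
  have hlower := htg.le_one_add_exp_neg_mul htf hn' hg_lc hg_nonneg hgd hf_lc hfd hm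
    (min_le_left _ _) fun t ht => abs_sub_comm (g t) (f t) ▸ hclose t ht
  refine ⟨?_, hupper⟩
  have hε : exp (-(n : ℝ)) ≤ 1 := exp_le_one_iff.2 (by linarith)
  calc (1 - exp (-(n : ℝ))) * tg ≤ (1 - exp (-(n : ℝ))) * ((1 + exp (-(n : ℝ))) * tf) := by
        gcongr
    _ ≤ tf := by nlinarith [mul_nonneg (sq_nonneg (exp (-(n : ℝ)))) htf.1.le]

/-- Klartag, Lemma 4.4: if two continuous log-concave functions on `[0,∞)`, `C²`-smooth on
`(0,∞)`, positive at `0` and with finite integral, are uniformly within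
`e^{−5n} min{f(0), g(0)}` of each other, then `t_n(f)` and `t_n(g)` differ by a factor of at
most `1 ± e^{−n}`. -/
theorem tn_stability
    (n : ℕ) (hn : 2 ≤ n) (f g : ℝ → ℝ)
    (hf_nonneg : ∀ t : ℝ, 0 ≤ t → 0 ≤ f t) (hg_nonneg : ∀ t : ℝ, 0 ≤ t → 0 ≤ g t)
    (hf_cont : ContinuousOn f (Set.Ici 0)) (hg_cont : ContinuousOn g (Set.Ici 0))
    (hf_smooth : ContDiffOn ℝ 2 f (Set.Ioi 0)) (hg_smooth : ContDiffOn ℝ 2 g (Set.Ioi 0))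
    (hf_lc : LogConcaveOnNonneg f) (hg_lc : LogConcaveOnNonneg g)
    (hf0 : 0 < f 0) (hg0 : 0 < g 0)
    (hf_int : IntegrableOn f (Set.Ioi 0)) (hg_int : IntegrableOn g (Set.Ioi 0))
    (hclose : ∀ t : ℝ, 0 ≤ t → |f t - g t| ≤ Real.exp (-(5 * n)) * min (f 0) (g 0)) :
    ∀ tf tg : ℝ, IsTp n f tf → IsTp n g tg →
      (1 - Real.exp (-(n : ℝ))) * tg ≤ tf ∧ tf ≤ (1 + Real.exp (-(n : ℝ))) * tg :=
  tn_stability_general n hn f g hf_nonneg hg_nonneg hf_smooth hg_smooth hf_lc hg_lc hf0 hg0 hclose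
end
end

section
/- Let n ≥ 1 be an integer, let β > 0, and let f: ℝⁿ → [0,∞) be a log-concave function that is the density of a random vector with zero mean and covariance matrix β·Id. Then f(0) ≥ e^{−n} sup_{x ∈ ℝⁿ} f(x) ≥ (c/√β)ⁿ, where 0 < c < 1 is a universal constant. -/
open MeasureTheory Real Set Filter
open scoped ENNReal NNReal RealInnerProductSpace

noncomputable section

/-- A function is log-concave. -/
def LogConcave {E : Type*} [AddCommMonoid E] [Module ℝ E] (f : E → ℝ) : Prop :=
  ∀ x y : E, ∀ l : ℝ, 0 < l → l < 1 →
    f x ^ l * f y ^ (1 - l) ≤ f (l • x + (1 - l) • y)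

/-- A function `f : ℝⁿ → [0, ∞)` is an isotropic density: it is nonnegative, integrates to one,
and is the density of a random vector with zero mean and identity covariance matrix. -/
def IsotropicDensity {n : ℕ} (f : EuclideanSpace ℝ (Fin n) → ℝ) : Prop :=
  (∀ x, 0 ≤ f x) ∧ (∫ x, f x = 1) ∧ (∫ x, f x • x = 0) ∧
    ∀ θ : EuclideanSpace ℝ (Fin n), ∫ x, f x * ⟪x, θ⟫ ^ 2 = ‖θ‖ ^ 2

/-- The total-variation distance `2 * sup_A |μ(A) - ν(A)|`. -/
def dTV {α : Type*} [MeasurableSpace α] (μ ν : Measure α) : ℝ :=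
  2 * ⨆ A : {s : Set α // MeasurableSet s}, |(μ A.1).toReal - (ν A.1).toReal|

/-!
Fradelizi's argument. Log-concavity gives `f x ^ l * f x₀ ^ (1 - l) ≤ f (l • x + (1 - l) • x₀)`;
integrating in `x` and letting `f x₀` approach `M = sup f` yields `∫ f ^ l ≤ M ^ (l - 1) l ^ (-n)`.
Since `f ^ l ≥ f M ^ (l - 1) (1 + (1 - l) log (M / f))` pointwise, letting `l → 1` gives the
entropy bound `∫ f log f ≥ log M - n`. The function `-log f` is convex on the interior of the
support, which contains the barycenter `0` because the covariance is nondegenerate, so Jensen's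
inequality gives `log f(0) ≥ ∫ f log f`, hence `f(0) ≥ e^{-n} M`.

For the lower bound on `M`, integrate `f` against the Gaussian `exp (-|x|² / (2β))`: the tangent
line of `exp` at `-n/2` and `∫ f |x|² = nβ` give `e^{-n/2} ≤ M (2πβ)^{n/2}`, so that
`e^{-n} M ≥ (c / √β)^n` with `c = e^{-1} (2πe)^{-1/2}`.
-/

open scoped Topology

lemma mul_one_add_mul_log_sub_le_rpow_mul_rpow {t M : ℝ} (s : ℝ) (ht : 0 ≤ t) (hM : 0 < M) :
    t * (1 + s * (log M - log t)) ≤ t ^ (1 - s) * M ^ s := by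
  rcases ht.eq_or_lt with rfl | ht
  · rw [zero_mul]
    exact mul_nonneg (rpow_nonneg le_rfl _) (rpow_nonneg hM.le _)
  calc t * (1 + s * (log M - log t)) ≤ t * exp (s * (log M - log t)) := by
        gcongr
        linarith [add_one_le_exp (s * (log M - log t))]
    _ = t ^ (1 - s) * M ^ s := by
        rw [rpow_def_of_pos ht, rpow_def_of_pos hM, ← exp_add]
        nth_rewrite 1 [← exp_log ht]
        rw [← exp_add]
        ring_nf

lemma le_of_forall_one_add_mul_le_inv_one_sub_pow {a : ℝ} (n : ℕ)
    (h : ∀ s ∈ Ioo (0 : ℝ) 1, 1 + s * a ≤ ((1 - s) ^ n)⁻¹) : a ≤ n := by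
  have hderiv : HasDerivAt (fun s : ℝ => ((1 - s) ^ n)⁻¹) n 0 := by
    simpa using (((hasDerivAt_id (0 : ℝ)).const_sub 1).fun_pow n).fun_inv (by simp)
  have hslope : Tendsto (slope (fun s : ℝ => ((1 - s) ^ n)⁻¹) 0) (𝓝[>] 0) (𝓝 n) :=
    (hasDerivAt_iff_tendsto_slope.mp hderiv).mono_left
      (nhdsWithin_mono _ fun s hs => ne_of_gt hs)
  refine ge_of_tendsto hslope ?_
  filter_upwards [Ioo_mem_nhdsGT (zero_lt_one' ℝ)] with s hs
  rw [slope_def_field]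
  simp only [sub_zero, one_pow, inv_one]
  rw [le_div_iff₀ hs.1]
  linarith [h s hs]

lemma Continuous.map_ciSup_le {ι : Type*} [Nonempty ι] {f : ι → ℝ} (hf : BddAbove (range f))
    {φ : ℝ → ℝ} (hφ : Continuous φ) {B : ℝ} (h : ∀ i, φ (f i) ≤ B) : φ (⨆ i, f i) ≤ B :=
  (isClosed_le hφ continuous_const).closure_subset_iff.mpr (range_subset_iff.mpr h)
    ((isLUB_ciSup hf).mem_closure (range_nonempty f))

lemma exists_pos_of_integral_pos {α : Type*} [MeasurableSpace α] {μ : Measure α} {f : α → ℝ}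
    (h : 0 < ∫ x, f x ∂μ) : ∃ x, 0 < f x := by
  by_contra! hle
  exact (integral_nonpos hle).not_gt h

theorem ConvexOn.map_integral_le_of_isOpen {α F : Type*} [MeasurableSpace α] {ν : Measure α}
    [IsProbabilityMeasure ν] [NormedAddCommGroup F] [NormedSpace ℝ F] [CompleteSpace F]
    {s : Set F} {g : F → ℝ} {φ : α → F} (hg : ConvexOn ℝ s g) (hgc : ContinuousOn g s)
    (hs : IsOpen s) (hφs : ∀ᵐ x ∂ν, φ x ∈ s) (hφi : Integrable φ ν)
    (hgφi : Integrable (fun x => g (φ x)) ν) (hmem : ∫ x, φ x ∂ν ∈ s) :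
    g (∫ x, φ x ∂ν) ≤ ∫ x, g (φ x) ∂ν := by
  have hclosure : (∫ x, φ x ∂ν, ∫ x, g (φ x) ∂ν) ∈ closure {p : F × ℝ | p.1 ∈ s ∧ g p.1 ≤ p.2} := by
    rw [← integral_pair hφi hgφi]
    exact hg.convex_epigraph.closure.integral_mem isClosed_closure
      (hφs.mono fun x hx => subset_closure ⟨hx, le_rfl⟩) (hφi.prodMk hgφi)
  by_contra! hlt
  -- the point then lies in the open set of points strictly below the graph over `s`,
  -- which misses the epigraph and hence its closure
  set W := (s ×ˢ univ) ∩ (fun p : F × ℝ => g p.1 - p.2) ⁻¹' Ioi 0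
  have hW : IsOpen W :=
    ((hgc.comp continuousOn_fst fun p hp => hp.1).sub continuousOn_snd).isOpen_inter_preimage
      (hs.prod isOpen_univ) isOpen_Ioi
  have hdisj : Disjoint W {p : F × ℝ | p.1 ∈ s ∧ g p.1 ≤ p.2} :=
    disjoint_left.mpr fun p hp hp' => by
      simp only [W, mem_inter_iff, mem_preimage, mem_Ioi] at hp
      linarith [hp'.2]
  exact disjoint_left.mp (hdisj.closure_right hW)
    ⟨⟨hmem, trivial⟩, by simpa using hlt⟩ hclosure

namespace LogConcave

variable {E : Type*} [AddCommGroup E] [Module ℝ E] {f : E → ℝ}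

lemma convex_setOf_pos (hf : LogConcave f) : Convex ℝ {x | 0 < f x} := by
  intro x hx y hy a b ha hb hab
  rcases ha.eq_or_lt with rfl | ha
  · simp_all
  rcases hb.eq_or_lt with rfl | hb
  · simp_all
  obtain rfl : b = 1 - a := by linarith
  exact (mul_pos (rpow_pos_of_pos hx a) (rpow_pos_of_pos hy _)).trans_le
    (hf x y a ha (by linarith))

lemma concaveOn_log (hf : LogConcave f) : ConcaveOn ℝ {x | 0 < f x} (fun x => log (f x)) := by
  refine ⟨hf.convex_setOf_pos, fun x hx y hy a b ha hb hab => ?_⟩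
  rcases ha.eq_or_lt with rfl | ha
  · simp_all
  rcases hb.eq_or_lt with rfl | hb
  · simp_all
  obtain rfl : b = 1 - a := by linarith
  have hxa : 0 < f x ^ a := rpow_pos_of_pos hx a
  have hya : 0 < f y ^ (1 - a) := rpow_pos_of_pos hy _
  calc a • log (f x) + (1 - a) • log (f y) = log (f x ^ a * f y ^ (1 - a)) := by
        rw [log_mul hxa.ne' hya.ne', log_rpow hx, log_rpow hy, smul_eq_mul, smul_eq_mul]
    _ ≤ log (f (a • x + (1 - a) • y)) := log_le_log (mul_pos hxa hya) (hf x y a ha (by linarith))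

end LogConcave

section AddHaar

variable {E : Type*} [NormedAddCommGroup E] [NormedSpace ℝ E] [FiniteDimensional ℝ E]
  [MeasurableSpace E] [BorelSpace E] {μ : Measure E} [μ.IsAddHaarMeasure]

lemma integral_comp_smul_add {F : Type*} [NormedAddCommGroup F] [NormedSpace ℝ F]
    (g : E → F) (a : ℝ) (c : E) :
    ∫ x, g (a • x + c) ∂μ = |(a ^ Module.finrank ℝ E)⁻¹| • ∫ x, g x ∂μ := by
  rw [Measure.integral_comp_smul μ (fun y => g (y + c)) a, integral_add_right_eq_self]

lemma Convex.ae_mem_interior {s : Set E} (hs : Convex ℝ s) :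
    ∀ᵐ x ∂μ, x ∈ s → x ∈ interior s := by
  filter_upwards [measure_eq_zero_iff_ae_notMem.mp (hs.addHaar_frontier μ)] with x hx hxs
  by_contra h
  exact hx ⟨subset_closure hxs, h⟩

namespace LogConcave

variable {f : E → ℝ}

lemma integrable_rpow (hf : LogConcave f) (hnn : ∀ x, 0 ≤ f x) (hint : Integrable f μ)
    {x₀ : E} (hx₀ : 0 < f x₀) {l : ℝ} (hl0 : 0 < l) (hl1 : l < 1) :
    Integrable (fun x => f x ^ l) μ := by
  refine Integrable.mono'
    (((hint.comp_add_right ((1 - l) • x₀)).comp_smul hl0.ne').div_const (f x₀ ^ (1 - l)))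
    ((continuous_rpow_const hl0.le).comp_aestronglyMeasurable hint.1) (ae_of_all _ fun x => ?_)
  rw [norm_of_nonneg (rpow_nonneg (hnn x) l), le_div_iff₀ (rpow_pos_of_pos hx₀ _)]
  exact hf x x₀ l hl0 hl1

lemma rpow_mul_integral_rpow_le (hf : LogConcave f) (hnn : ∀ x, 0 ≤ f x)
    (hint : Integrable f μ) (h1 : ∫ x, f x ∂μ = 1) (x₀ : E) {l : ℝ} (hl0 : 0 < l) (hl1 : l < 1) :
    f x₀ ^ (1 - l) * ∫ x, f x ^ l ∂μ ≤ (l ^ Module.finrank ℝ E)⁻¹ := by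
  rw [← integral_const_mul]
  calc ∫ x, f x₀ ^ (1 - l) * f x ^ l ∂μ ≤ ∫ x, f (l • x + (1 - l) • x₀) ∂μ :=
        integral_mono_of_nonneg
          (ae_of_all _ fun x => mul_nonneg (rpow_nonneg (hnn _) _) (rpow_nonneg (hnn x) _))
          ((hint.comp_add_right _).comp_smul hl0.ne')
          (ae_of_all _ fun x => (mul_comm _ _).trans_le (hf x x₀ l hl0 hl1))
    _ = (l ^ Module.finrank ℝ E)⁻¹ := by
        rw [integral_comp_smul_add, h1, smul_eq_mul, mul_one, abs_of_pos (by positivity)]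

lemma bddAbove_range (hf : LogConcave f) (hnn : ∀ x, 0 ≤ f x) (hint : Integrable f μ)
    (h1 : ∫ x, f x ∂μ = 1) : BddAbove (range f) := by
  obtain ⟨x₁, hx₁⟩ := exists_pos_of_integral_pos (h1 ▸ one_pos : 0 < ∫ x, f x ∂μ)
  set I := ∫ x, f x ^ (1 / 2 : ℝ) ∂μ
  have hI : 0 < I := by
    have hsupp : Function.support (fun x => f x ^ (1 / 2 : ℝ)) = Function.support f := by
      ext x
      simp [rpow_eq_zero (hnn x)]
    rw [integral_pos_iff_support_of_nonneg (fun x => rpow_nonneg (hnn x) _)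
      (hf.integrable_rpow hnn hint hx₁ (by norm_num) (by norm_num)), hsupp,
      ← integral_pos_iff_support_of_nonneg hnn hint, h1]
    exact one_pos
  refine ⟨(2 ^ Module.finrank ℝ E / I) ^ 2, forall_mem_range.mpr fun x => ?_⟩
  have hx := hf.rpow_mul_integral_rpow_le hnn hint h1 x (l := 1 / 2) (by norm_num) (by norm_num)
  norm_num at hx
  rw [← sq_sqrt (hnn x), sqrt_eq_rpow]
  refine pow_le_pow_left₀ (rpow_nonneg (hnn x) _) ?_ 2
  rw [le_div_iff₀ hI]
  simpa [I] using hx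

lemma integrable_mul_log (hf : LogConcave f) (hnn : ∀ x, 0 ≤ f x) (hint : Integrable f μ)
    (h1 : ∫ x, f x ∂μ = 1) : Integrable (fun x => f x * log (f x)) μ := by
  obtain ⟨x₁, hx₁⟩ := exists_pos_of_integral_pos (h1 ▸ one_pos : 0 < ∫ x, f x ∂μ)
  set M := ⨆ x, f x
  have hfM : ∀ x, f x ≤ M := le_ciSup (hf.bddAbove_range hnn hint h1)
  have hM : 0 < M := hx₁.trans_le (hfM x₁)
  have hdefect : Integrable (fun x => f x * log M - f x * log (f x)) μ := by
    refine Integrable.mono'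
      (((((hf.integrable_rpow hnn hint hx₁ (l := 1 / 2) (by norm_num) (by norm_num)).mul_const
        (M ^ (1 / 2 : ℝ))).sub hint).const_mul 2))
      ((hint.1.mul_const _).sub (continuous_mul_log.comp_aestronglyMeasurable hint.1))
      (ae_of_all _ fun x => ?_)
    have hnonneg : 0 ≤ f x * log M - f x * log (f x) := by
      rcases (hnn x).eq_or_lt with h | h
      · simp [← h]
      · rw [← mul_sub]
        exact mul_nonneg h.le (sub_nonneg.2 (log_le_log h (hfM x)))
    have hbound := mul_one_add_mul_log_sub_le_rpow_mul_rpow (1 / 2) (hnn x) hM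
    rw [norm_of_nonneg hnonneg]
    norm_num at hbound ⊢
    linarith
  exact ((hint.mul_const (log M)).sub hdefect).congr
    (ae_of_all _ fun x => by simp only [Pi.sub_apply]; ring)

lemma one_add_mul_log_iSup_sub_integral_le (hf : LogConcave f) (hnn : ∀ x, 0 ≤ f x)
    (hint : Integrable f μ) (h1 : ∫ x, f x ∂μ = 1) {s : ℝ} (hs0 : 0 < s) (hs1 : s < 1) :
    1 + s * (log (⨆ x, f x) - ∫ x, f x * log (f x) ∂μ) ≤
      (⨆ x, f x) ^ s * ∫ x, f x ^ (1 - s) ∂μ := by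
  obtain ⟨x₁, hx₁⟩ := exists_pos_of_integral_pos (h1 ▸ one_pos : 0 < ∫ x, f x ∂μ)
  set M := ⨆ x, f x
  have hM : 0 < M := hx₁.trans_le (le_ciSup (hf.bddAbove_range hnn hint h1) x₁)
  have hlog := hf.integrable_mul_log hnn hint h1
  have hexpand : ∫ x, f x * (1 + s * (log M - log (f x))) ∂μ =
      1 + s * (log M - ∫ x, f x * log (f x) ∂μ) := by
    simp_rw [show ∀ x, f x * (1 + s * (log M - log (f x)))
      = f x + s * log M * f x - s * (f x * log (f x)) from fun x => by ring]
    have hlin : Integrable (fun x => f x + s * log M * f x) μ := hint.add (hint.const_mul _)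
    rw [integral_sub hlin (hlog.const_mul s), integral_add hint (hint.const_mul _),
      integral_const_mul, integral_const_mul, h1]
    ring
  rw [← hexpand, ← integral_const_mul]
  refine integral_mono (((hint.add (hint.const_mul (s * log M))).sub (hlog.const_mul s)).congr
    (ae_of_all _ fun x => by simp only [Pi.add_apply, Pi.sub_apply]; ring))
    ((hf.integrable_rpow hnn hint hx₁ (by linarith) (by linarith)).const_mul _) fun x => ?_
  rw [mul_comm (M ^ s)]
  exact mul_one_add_mul_log_sub_le_rpow_mul_rpow s (hnn x) hM

lemma log_iSup_sub_finrank_le_integral_mul_log (hf : LogConcave f) (hnn : ∀ x, 0 ≤ f x)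
    (hint : Integrable f μ) (h1 : ∫ x, f x ∂μ = 1) :
    log (⨆ x, f x) - Module.finrank ℝ E ≤ ∫ x, f x * log (f x) ∂μ := by
  obtain ⟨x₁, hx₁⟩ := exists_pos_of_integral_pos (h1 ▸ one_pos : 0 < ∫ x, f x ∂μ)
  set M := ⨆ x, f x
  have hbdd := hf.bddAbove_range hnn hint h1
  have hM : 0 < M := hx₁.trans_le (le_ciSup hbdd x₁)
  set G := log M - ∫ x, f x * log (f x) ∂μ
  suffices G ≤ Module.finrank ℝ E by linarith
  refine le_of_forall_one_add_mul_le_inv_one_sub_pow _ fun s ⟨hs0, hs1⟩ => ?_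
  have hpoint : ∀ x₀, f x₀ ^ s * (1 + s * G) ≤ M ^ s * ((1 - s) ^ Module.finrank ℝ E)⁻¹ := by
    intro x₀
    have hx₀ := hf.rpow_mul_integral_rpow_le hnn hint h1 x₀ (l := 1 - s) (by linarith) (by linarith)
    rw [sub_sub_cancel] at hx₀
    calc f x₀ ^ s * (1 + s * G) ≤ f x₀ ^ s * (M ^ s * ∫ x, f x ^ (1 - s) ∂μ) :=
          mul_le_mul_of_nonneg_left (hf.one_add_mul_log_iSup_sub_integral_le hnn hint h1 hs0 hs1)
            (rpow_nonneg (hnn _) _)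
      _ = M ^ s * (f x₀ ^ s * ∫ x, f x ^ (1 - s) ∂μ) := by ring
      _ ≤ M ^ s * ((1 - s) ^ Module.finrank ℝ E)⁻¹ :=
          mul_le_mul_of_nonneg_left hx₀ (rpow_nonneg hM.le _)
  exact le_of_mul_le_mul_left
    (((continuous_rpow_const hs0.le).mul continuous_const).map_ciSup_le hbdd hpoint)
    (rpow_pos_of_pos hM s)

theorem integral_mul_log_le_log_barycenter (hf : LogConcave f) (hnn : ∀ x, 0 ≤ f x)
    (hint : Integrable f μ) (h1 : ∫ x, f x ∂μ = 1) (hmean_int : Integrable (fun x => f x • x) μ)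
    (hlog : Integrable (fun x => f x * log (f x)) μ)
    (hmem : ∫ x, f x • x ∂μ ∈ interior {x | 0 < f x}) :
    ∫ x, f x * log (f x) ∂μ ≤ log (f (∫ x, f x • x ∂μ)) := by
  set ν := μ.withDensity fun x => ENNReal.ofReal (f x)
  have hρ : AEMeasurable (fun x => ENNReal.ofReal (f x)) μ := hint.1.aemeasurable.ennreal_ofReal
  have hρ_fin : ∀ᵐ x ∂μ, ENNReal.ofReal (f x) < ∞ := ae_of_all _ fun _ => ENNReal.ofReal_lt_top
  have hρ_toReal : ∀ x, (ENNReal.ofReal (f x)).toReal = f x :=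
    fun x => ENNReal.toReal_ofReal (hnn x)
  have : IsProbabilityMeasure ν := ⟨by
    rw [withDensity_apply _ MeasurableSet.univ, Measure.restrict_univ,
      ← ofReal_integral_eq_lintegral_ofReal hint (ae_of_all _ hnn), h1, ENNReal.ofReal_one]⟩
  have hconv : ConvexOn ℝ (interior {x | 0 < f x}) (fun x => -log (f x)) :=
    hf.concaveOn_log.neg.subset interior_subset hf.convex_setOf_pos.interior
  have hae : ∀ᵐ x ∂ν, x ∈ interior {x | 0 < f x} := by
    rw [ae_withDensity_iff' hρ]
    filter_upwards [hf.convex_setOf_pos.ae_mem_interior (μ := μ)] with x hx hfx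
    exact hx (by simpa using hfx)
  have hid : Integrable (fun x => x) ν := by
    rw [integrable_withDensity_iff_integrable_smul₀' hρ hρ_fin]
    simpa only [hρ_toReal] using hmean_int
  have hneglog : Integrable (fun x => -log (f x)) ν := by
    rw [integrable_withDensity_iff_integrable_smul₀' hρ hρ_fin]
    simp only [hρ_toReal, smul_eq_mul, mul_neg]
    exact hlog.neg
  have hbar : ∫ x, x ∂ν = ∫ x, f x • x ∂μ := by
    rw [integral_withDensity_eq_integral_toReal_smul₀ hρ hρ_fin]
    simp only [hρ_toReal]
  have hjensen := hconv.map_integral_le_of_isOpen (hconv.continuousOn isOpen_interior)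
    isOpen_interior hae hid hneglog (hbar ▸ hmem)
  rw [hbar, integral_withDensity_eq_integral_toReal_smul₀ hρ hρ_fin] at hjensen
  simp only [hρ_toReal, smul_eq_mul, mul_neg, integral_neg] at hjensen
  linarith

theorem exp_neg_finrank_mul_iSup_le_barycenter (hf : LogConcave f) (hnn : ∀ x, 0 ≤ f x)
    (hint : Integrable f μ) (h1 : ∫ x, f x ∂μ = 1) (hmean_int : Integrable (fun x => f x • x) μ)
    (hmem : ∫ x, f x • x ∂μ ∈ interior {x | 0 < f x}) :
    exp (-Module.finrank ℝ E) * ⨆ x, f x ≤ f (∫ x, f x • x ∂μ) := by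
  have hpos : 0 < f (∫ x, f x • x ∂μ) := interior_subset (s := {x | 0 < f x}) hmem
  have hM : 0 < ⨆ x, f x := hpos.trans_le (le_ciSup (hf.bddAbove_range hnn hint h1) _)
  have hlog := (hf.log_iSup_sub_finrank_le_integral_mul_log hnn hint h1).trans
    (hf.integral_mul_log_le_log_barycenter hnn hint h1 hmean_int
      (hf.integrable_mul_log hnn hint h1) hmem)
  calc exp (-Module.finrank ℝ E) * ⨆ x, f x = exp (log (⨆ x, f x) - Module.finrank ℝ E) := by
        rw [exp_sub, exp_log hM, exp_neg]
        ring
    _ ≤ f (∫ x, f x • x ∂μ) := by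
        rw [← exp_log hpos]
        exact exp_le_exp.2 hlog

end LogConcave

end AddHaar

lemma integrable_smul_self_of_integrable_mul_sq_norm {E : Type*} [NormedAddCommGroup E]
    [NormedSpace ℝ E] [FiniteDimensional ℝ E] [MeasurableSpace E] [BorelSpace E] {μ : Measure E}
    {f : E → ℝ} (hnn : ∀ x, 0 ≤ f x) (hint : Integrable f μ)
    (hsq : Integrable (fun x => f x * ‖x‖ ^ 2) μ) :
    Integrable (fun x => f x • x) μ := by
  refine Integrable.mono' (hint.add hsq) (hint.1.smul aestronglyMeasurable_id)
    (ae_of_all _ fun x => ?_)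
  rw [norm_smul, norm_of_nonneg (hnn x), Pi.add_apply]
  nlinarith [hnn x, sq_nonneg (‖x‖ - 1)]

section InnerProductSpace

variable {E : Type*} [NormedAddCommGroup E] [InnerProductSpace ℝ E] [FiniteDimensional ℝ E]
  [MeasurableSpace E]

lemma integral_mul_sq_norm_eq {μ : Measure E} {f : E → ℝ} {β : ℝ} (hβ : β ≠ 0)
    (hcov : ∀ θ : E, ∫ x, f x * ⟪x, θ⟫ ^ 2 ∂μ = β * ‖θ‖ ^ 2) :
    Integrable (fun x => f x * ‖x‖ ^ 2) μ ∧
      ∫ x, f x * ‖x‖ ^ 2 ∂μ = Module.finrank ℝ E * β := by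
  set b := stdOrthonormalBasis ℝ E
  have hexpand : (fun x => f x * ‖x‖ ^ 2) = fun x => ∑ i, f x * ⟪x, b i⟫ ^ 2 := by
    ext x
    rw [← b.sum_sq_inner_left, Finset.mul_sum]
  have hcoord : ∀ i, ∫ x, f x * ⟪x, b i⟫ ^ 2 ∂μ = β := fun i => by
    rw [hcov, b.norm_eq_one, one_pow, mul_one]
  have hint : ∀ i, Integrable (fun x => f x * ⟪x, b i⟫ ^ 2) μ := fun i =>
    .of_integral_ne_zero (by rw [hcoord]; exact hβ)
  rw [hexpand]
  refine ⟨integrable_finsetSum _ fun i _ => hint i, ?_⟩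
  rw [integral_finsetSum _ fun i _ => hint i]
  simp [hcoord]

theorem zero_mem_interior_setOf_pos_of_centered [BorelSpace E] {μ : Measure E}
    [μ.IsAddHaarMeasure] {f : E → ℝ} (hS : Convex ℝ {x | 0 < f x}) (hnn : ∀ x, 0 ≤ f x)
    (h1 : ∫ x, f x ∂μ = 1) (hmean_int : Integrable (fun x => f x • x) μ)
    (hmean : ∫ x, f x • x ∂μ = 0)
    (hnondeg : ∀ θ : E, θ ≠ 0 → ∫ x, f x * ⟪x, θ⟫ ^ 2 ∂μ ≠ 0) :
    (0 : E) ∈ interior {x | 0 < f x} := by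
  have hae : ∀ᵐ x ∂μ, 0 < f x → x ∈ interior {x | 0 < f x} := hS.ae_mem_interior
  by_contra h0
  obtain ⟨y, hy⟩ : (interior {x | 0 < f x}).Nonempty := by
    by_contra! hempty
    have hzero : f =ᵐ[μ] 0 := by
      filter_upwards [hae] with x hx
      by_contra hfx
      simpa [hempty] using hx ((hnn x).lt_of_ne' hfx)
    simp [integral_congr_ae hzero] at h1
  obtain ⟨L, hL⟩ := geometric_hahn_banach_open_point hS.interior isOpen_interior h0
  set θ := (InnerProductSpace.toDual ℝ E).symm L
  have hLθ : ∀ x, L x = ⟪x, θ⟫ := fun x => by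
    rw [real_inner_comm, InnerProductSpace.toDual_symm_apply]
  have hθ : θ ≠ 0 := by
    intro h
    simpa [hLθ, h] using hL y hy
  have hnonpos : ∀ᵐ x ∂μ, f x * ⟪x, θ⟫ ≤ 0 := by
    filter_upwards [hae] with x hx
    rcases (hnn x).eq_or_lt with h | h
    · simp [← h]
    · exact mul_nonpos_of_nonneg_of_nonpos h.le (by simpa [hLθ] using (hL x (hx h)).le)
  have hfirst_int : Integrable (fun x => f x * ⟪x, θ⟫) μ := by
    simpa [real_inner_smul_left] using hmean_int.inner_const (𝕜 := ℝ) θ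
  have hfirst : ∫ x, f x * ⟪x, θ⟫ ∂μ = 0 := by
    have := integral_inner (𝕜 := ℝ) hmean_int θ
    simp_rw [hmean, inner_zero_right, real_inner_smul_right, real_inner_comm _ θ] at this
    exact this
  have hvanish : ∀ᵐ x ∂μ, f x * ⟪x, θ⟫ = 0 := by
    have := (integral_eq_zero_iff_of_nonneg_ae (hnonpos.mono fun x hx => neg_nonneg.2 hx)
      hfirst_int.neg).mp (by rw [integral_neg, hfirst, neg_zero])
    filter_upwards [this] with x hx
    simpa using hx
  refine hnondeg θ hθ (integral_eq_zero_of_ae ?_)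
  filter_upwards [hvanish] with x hx
  rw [Pi.zero_apply, sq, ← mul_assoc, hx, zero_mul]

theorem exp_neg_mul_le_mul_rpow [BorelSpace E] {f : E → ℝ} {M b : ℝ} (hb : 0 < b)
    (hnn : ∀ x, 0 ≤ f x) (hfM : ∀ x, f x ≤ M) (hint : Integrable f) (h1 : ∫ x, f x = 1)
    (hsq : Integrable fun x => f x * ‖x‖ ^ 2) :
    exp (-(b * ∫ x, f x * ‖x‖ ^ 2)) ≤ M * (π / b) ^ ((Module.finrank ℝ E : ℝ) / 2) := by
  set σ := ∫ x, f x * ‖x‖ ^ 2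
  have hgauss : Integrable fun x : E => exp (-b * ‖x‖ ^ 2) :=
    .of_integral_ne_zero (by rw [GaussianFourier.integral_rexp_neg_mul_sq_norm hb]; positivity)
  calc exp (-(b * σ))
      = ∫ x, exp (-(b * σ)) * ((1 + b * σ) * f x - b * (f x * ‖x‖ ^ 2)) := by
        rw [integral_const_mul, integral_sub (hint.const_mul _) (hsq.const_mul _),
          integral_const_mul, integral_const_mul, h1]
        ring
    _ ≤ ∫ x, M * exp (-b * ‖x‖ ^ 2) := by
        refine integral_mono (((hint.const_mul _).sub (hsq.const_mul _)).const_mul _)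
          (hgauss.const_mul M) fun x => ?_
        -- the tangent line of `exp` at `-(b * σ)`
        have htangent : exp (-(b * σ)) * (1 + b * σ - b * ‖x‖ ^ 2) ≤ exp (-b * ‖x‖ ^ 2) := by
          calc exp (-(b * σ)) * (1 + b * σ - b * ‖x‖ ^ 2)
              ≤ exp (-(b * σ)) * exp (b * σ - b * ‖x‖ ^ 2) := by
                gcongr
                linarith [add_one_le_exp (b * σ - b * ‖x‖ ^ 2)]
            _ = exp (-b * ‖x‖ ^ 2) := by rw [← exp_add]; ring_nf
        calc exp (-(b * σ)) * ((1 + b * σ) * f x - b * (f x * ‖x‖ ^ 2))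
            = f x * (exp (-(b * σ)) * (1 + b * σ - b * ‖x‖ ^ 2)) := by ring
          _ ≤ f x * exp (-b * ‖x‖ ^ 2) := mul_le_mul_of_nonneg_left htangent (hnn x)
          _ ≤ M * exp (-b * ‖x‖ ^ 2) := mul_le_mul_of_nonneg_right (hfM x) (exp_pos _).le
    _ = M * (π / b) ^ ((Module.finrank ℝ E : ℝ) / 2) := by
        rw [integral_const_mul, GaussianFourier.integral_rexp_neg_mul_sq_norm hb]

theorem inv_sqrt_two_pi_exp_mul_pow_finrank_le [BorelSpace E] {f : E → ℝ} {M β : ℝ}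
    (hβ : 0 < β) (hnn : ∀ x, 0 ≤ f x) (hfM : ∀ x, f x ≤ M) (hint : Integrable f) (h1 : ∫ x, f x = 1)
    (hsq : Integrable fun x => f x * ‖x‖ ^ 2)
    (hσ : ∫ x, f x * ‖x‖ ^ 2 = Module.finrank ℝ E * β) :
    (√(2 * π * exp 1 * β))⁻¹ ^ Module.finrank ℝ E ≤ M := by
  set n := Module.finrank ℝ E
  have key := exp_neg_mul_le_mul_rpow (b := (2 * β)⁻¹) (by positivity) hnn hfM hint h1 hsq
  rw [hσ, show (2 * β)⁻¹ * (n * β) = (n : ℝ) / 2 by field_simp,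
    show π / (2 * β)⁻¹ = 2 * π * β by field_simp] at key
  have hpow : √(2 * π * exp 1 * β) ^ n = (2 * π * β) ^ ((n : ℝ) / 2) * exp ((n : ℝ) / 2) := by
    rw [sqrt_eq_rpow, ← rpow_natCast, ← rpow_mul (by positivity),
      show 2 * π * exp 1 * β = 2 * π * β * exp 1 by ring,
      mul_rpow (by positivity) (exp_pos 1).le, exp_one_rpow]
    ring_nf
  rw [inv_pow, hpow, inv_le_iff_one_le_mul₀ (by positivity)]
  calc (1 : ℝ) = exp (-((n : ℝ) / 2)) * exp ((n : ℝ) / 2) := by rw [← exp_add]; simp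
    _ ≤ M * (2 * π * β) ^ ((n : ℝ) / 2) * exp ((n : ℝ) / 2) := by gcongr
    _ = M * ((2 * π * β) ^ ((n : ℝ) / 2) * exp ((n : ℝ) / 2)) := by ring

end InnerProductSpace

/-- Klartag, Lemma 4.7: a log-concave density `f` on ℝⁿ with zero mean and covariance `β·Id`
satisfies `f(0) ≥ e^{−n} sup f ≥ (c/√β)ⁿ` for a universal constant `0 < c < 1`. -/
theorem density_at_zero_large :
    ∃ c : ℝ, 0 < c ∧ c < 1 ∧
      ∀ (n : ℕ), 1 ≤ n → ∀ β : ℝ, 0 < β →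
        ∀ f : EuclideanSpace ℝ (Fin n) → ℝ,
          LogConcave f →
          (∀ x, 0 ≤ f x) → (∫ x, f x = 1) → (∫ x, f x • x = 0) →
          (∀ θ : EuclideanSpace ℝ (Fin n), ∫ x, f x * ⟪x, θ⟫ ^ 2 = β * ‖θ‖ ^ 2) →
          Real.exp (-(n : ℝ)) * (⨆ x, f x) ≤ f 0 ∧
          (c / Real.sqrt β) ^ n ≤ Real.exp (-(n : ℝ)) * ⨆ x, f x := by
  refine ⟨exp (-1) / √(2 * π * exp 1), by positivity, ?_, ?_⟩
  · rw [div_lt_one (by positivity), lt_sqrt (exp_pos _).le]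
    have hexp : exp (-1) < 1 := (exp_lt_exp.2 neg_one_lt_zero).trans_eq exp_zero
    nlinarith [exp_pos (-1), add_one_le_exp 1, pi_gt_three]
  intro n _ β hβ f hf hnn h1 hmean hcov
  have hint : Integrable f := .of_integral_ne_zero (by rw [h1]; exact one_ne_zero)
  obtain ⟨hsq_int, hsq⟩ := integral_mul_sq_norm_eq hβ.ne' hcov
  have hmean_int := integrable_smul_self_of_integrable_mul_sq_norm hnn hint hsq_int
  have h0 : (0 : EuclideanSpace ℝ (Fin n)) ∈ interior {x | 0 < f x} :=
    zero_mem_interior_setOf_pos_of_centered hf.convex_setOf_pos hnn h1 hmean_int hmean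
      fun θ hθ => by rw [hcov]; exact mul_ne_zero hβ.ne' (pow_ne_zero _ (norm_ne_zero_iff.2 hθ))
  have hfM : ∀ x, f x ≤ ⨆ y, f y := le_ciSup (hf.bddAbove_range hnn hint h1)
  have hfradelizi := hf.exp_neg_finrank_mul_iSup_le_barycenter hnn hint h1 hmean_int (hmean ▸ h0)
  have hgauss := inv_sqrt_two_pi_exp_mul_pow_finrank_le hβ hnn hfM hint h1 hsq_int hsq
  rw [finrank_euclideanSpace_fin, hmean] at hfradelizi
  rw [finrank_euclideanSpace_fin] at hgauss
  refine ⟨hfradelizi, ?_⟩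
  calc (exp (-1) / √(2 * π * exp 1) / √β) ^ n = exp (-n) * (√(2 * π * exp 1 * β))⁻¹ ^ n := by
        rw [div_div, ← sqrt_mul (by positivity), div_eq_mul_inv, mul_pow, ← exp_nat_mul,
          mul_neg_one]
    _ ≤ exp (-n) * ⨆ x, f x := by gcongr
end
end

section
/- Let n ≥ 2 be an integer, let α ≥ 5, and let f: [0,∞) → [0,∞) be a log-concave function with ∫₀^∞ f < ∞. Denote t₀ = sup{ t > 0 : f(t) ≥ e^{−αn} f(0) }. Then ∫₀^{t₀} t^{n−1} f(t) dt ≥ (1 − e^{−αn/8}) ∫₀^∞ t^{n−1} f(t) dt. -/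
open MeasureTheory Real Set Filter
open scoped ENNReal NNReal

noncomputable section

/-!
Write `c = αn` and `t₀ = sup {t > 0 : f t ≥ e^{-c} f 0}`. Beyond `t₀`, log-concavity forces
`f t ≤ f 0 · e^{-16ct/(17t₀)}`, so the mass of `t^{n-1} f t` beyond `t₀` is at most
`f 0 · t₀ⁿ e^{-16c/17}`. Before `t₀`, the chord from `0` to a point of the set beyond `15t₀/16`
keeps `f ≥ e^{-32n/15} f 0` on `[t₀/α, 2t₀/α]`, so the mass there is at least
`f 0 · (t₀/α)ⁿ e^{-32n/15}`. As `log α + 32/15 ≤ (16/17 - 1/8) α` for `α ≥ 5`, the tail is at most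
`e^{-c/8}` times the head. If the set is empty, `f` vanishes on `(0, ∞)`; if it is unbounded, there
is nothing to prove.
-/

theorem setOf_pos_coe_le_sSup_image_of_bddAbove {S : Set ℝ} (hne : S.Nonempty) (hbdd : BddAbove S) :
    {t : ℝ | 0 < t ∧ (t : EReal) ≤ sSup (Real.toEReal '' S)} = Ioc 0 (sSup S) := by
  rw [← Monotone.map_csSup_of_continuousAt continuous_coe_real_ereal.continuousAt
    (fun _ _ => EReal.coe_le_coe) hne hbdd]
  ext t
  simp [EReal.coe_le_coe_iff]

theorem setOf_pos_coe_le_sSup_image_of_not_bddAbove {S : Set ℝ} (hbdd : ¬BddAbove S) :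
    {t : ℝ | 0 < t ∧ (t : EReal) ≤ sSup (Real.toEReal '' S)} = Ioi 0 := by
  have htop : sSup (Real.toEReal '' S) = ⊤ := by
    refine (EReal.eq_top_iff_forall_lt _).2 fun y => ?_
    obtain ⟨s, hs, hys⟩ := not_bddAbove_iff.1 hbdd y
    exact (EReal.coe_lt_coe_iff.2 hys).trans_le (le_sSup (mem_image_of_mem _ hs))
  ext t
  simp [htop]

theorem pow_le_pow_mul_exp {T t : ℝ} (m : ℕ) (hT : 0 < T) (ht : 0 ≤ t) :
    t ^ m ≤ T ^ m * exp (m * (t / T - 1)) := by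
  have hratio : t / T ≤ exp (t / T - 1) := by linarith [add_one_le_exp (t / T - 1)]
  calc t ^ m = T ^ m * (t / T) ^ m := by rw [← mul_pow, mul_div_cancel₀ t hT.ne']
    _ ≤ T ^ m * exp (t / T - 1) ^ m := by gcongr
    _ = T ^ m * exp (m * (t / T - 1)) := by rw [exp_nat_mul]

theorem pow_mul_exp_neg_mul_le {T β t : ℝ} (m : ℕ) (hT : 0 < T) (ht : 0 ≤ t) :
    t ^ m * exp (-(β * t)) ≤ T ^ m * exp (-m) * exp (-(β - m / T) * t) := by
  calc t ^ m * exp (-(β * t)) ≤ T ^ m * exp (m * (t / T - 1)) * exp (-(β * t)) := by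
        gcongr; exact pow_le_pow_mul_exp m hT ht
    _ = T ^ m * exp (-m) * exp (-(β - m / T) * t) := by
        rw [mul_assoc, mul_assoc, ← exp_add, ← exp_add]; ring_nf

theorem integrableOn_Ioi_pow_mul_exp_neg_mul {T β : ℝ} (m : ℕ) (hT : 0 < T) (hβ : m < β * T) :
    IntegrableOn (fun t => t ^ m * exp (-(β * t))) (Ioi T) := by
  have hb : 0 < β - m / T := by rw [sub_pos, div_lt_iff₀ hT]; exact hβ
  refine Integrable.mono' ((exp_neg_integrableOn_Ioi T hb).const_mul (T ^ m * exp (-m)))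
    (by fun_prop) ?_
  filter_upwards [ae_restrict_mem measurableSet_Ioi] with t ht
  have ht0 : 0 ≤ t := hT.le.trans ht.le
  rw [norm_of_nonneg (by positivity)]
  exact pow_mul_exp_neg_mul_le m hT ht0

theorem setIntegral_Ioi_pow_mul_exp_neg_mul_le {T β : ℝ} (m : ℕ) (hT : 0 < T)
    (hβ : m + 1 ≤ β * T) :
    ∫ t in Ioi T, t ^ m * exp (-(β * t)) ≤ T ^ (m + 1) * exp (-(β * T)) := by
  set b := β - m / T
  have hbT : b * T = β * T - m := by simp only [b]; field_simp
  have hb : 0 < b := pos_of_mul_pos_left (by linarith : 0 < b * T) hT.le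
  calc ∫ t in Ioi T, t ^ m * exp (-(β * t))
      ≤ ∫ t in Ioi T, T ^ m * exp (-m) * exp (-b * t) := by
        refine integral_mono_of_nonneg ?_ ((exp_neg_integrableOn_Ioi T hb).const_mul _) ?_
        · filter_upwards [ae_restrict_mem measurableSet_Ioi] with t ht
          have ht0 : 0 ≤ t := hT.le.trans ht.le
          positivity
        · filter_upwards [ae_restrict_mem measurableSet_Ioi] with t ht
          exact pow_mul_exp_neg_mul_le m hT (hT.le.trans ht.le)
    _ = T ^ m * exp (-(β * T)) / b := by
        have hexp : exp (-m) * exp (-b * T) = exp (-(β * T)) := by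
          rw [← exp_add]; congr 1; linarith
        rw [integral_const_mul, integral_exp_mul_Ioi (neg_lt_zero.2 hb), neg_div_neg_eq, ← hexp]
        ring
    _ ≤ T ^ (m + 1) * exp (-(β * T)) := by
        rw [div_le_iff₀ hb, pow_succ, mul_right_comm _ T, mul_assoc _ T]
        exact le_mul_of_one_le_right (by positivity) (by linarith)

theorem integrableOn_Ioi_pow_mul_of_le_mul_exp {g : ℝ → ℝ} {T β C : ℝ} (m : ℕ) (hT : 0 < T)
    (hβ : m < β * T) (hg_meas : AEStronglyMeasurable g (volume.restrict (Ioi T)))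
    (hg_nonneg : ∀ t, T < t → 0 ≤ g t) (hg_le : ∀ t, T < t → g t ≤ C * exp (-(β * t))) :
    IntegrableOn (fun t => t ^ m * g t) (Ioi T) := by
  refine ((integrableOn_Ioi_pow_mul_exp_neg_mul m hT hβ).const_mul C).mono'
    ((continuous_pow m).aestronglyMeasurable.mul hg_meas) ?_
  filter_upwards [ae_restrict_mem measurableSet_Ioi] with t hTt
  have ht : 0 ≤ t := hT.le.trans hTt.le
  rw [norm_of_nonneg (mul_nonneg (pow_nonneg ht m) (hg_nonneg t hTt)), mul_left_comm]
  exact mul_le_mul_of_nonneg_left (hg_le t hTt) (pow_nonneg ht m)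

theorem setIntegral_Ioi_pow_mul_le_of_le_mul_exp {g : ℝ → ℝ} {T β C : ℝ} (m : ℕ) (hT : 0 < T)
    (hβ : m + 1 ≤ β * T) (hC : 0 ≤ C) (hg_nonneg : ∀ t, T < t → 0 ≤ g t)
    (hg_le : ∀ t, T < t → g t ≤ C * exp (-(β * t))) :
    ∫ t in Ioi T, t ^ m * g t ≤ C * (T ^ (m + 1) * exp (-(β * T))) := by
  calc ∫ t in Ioi T, t ^ m * g t ≤ ∫ t in Ioi T, C * (t ^ m * exp (-(β * t))) := by
        refine integral_mono_of_nonneg ?_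
          ((integrableOn_Ioi_pow_mul_exp_neg_mul m hT (by linarith)).const_mul C) ?_
        all_goals filter_upwards [ae_restrict_mem measurableSet_Ioi] with t hTt
        · exact mul_nonneg (pow_nonneg (hT.le.trans hTt.le) m) (hg_nonneg t hTt)
        · rw [mul_left_comm]
          exact mul_le_mul_of_nonneg_left (hg_le t hTt) (pow_nonneg (hT.le.trans hTt.le) m)
    _ ≤ C * (T ^ (m + 1) * exp (-(β * T))) := by
        rw [integral_const_mul]
        exact mul_le_mul_of_nonneg_left (setIntegral_Ioi_pow_mul_exp_neg_mul_le m hT hβ) hC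

theorem log_add_le_of_five_le {α : ℝ} (hα : 5 ≤ α) : log α + 32 / 15 ≤ 111 * α / 136 := by
  have h5 : log (α / 5) ≤ α / 5 - 1 := log_le_sub_one_of_pos (by positivity)
  have h54 : log (5 / 4) ≤ 5 / 4 - 1 := log_le_sub_one_of_pos (by norm_num)
  rw [log_div (by positivity) (by norm_num)] at h5
  rw [log_div (by norm_num) (by norm_num), show (4 : ℝ) = 2 ^ 2 by norm_num, log_pow] at h54
  linarith [log_two_lt_d9]

theorem exp_neg_mul_pow_le {α : ℝ} (hα : 5 ≤ α) (n : ℕ) :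
    exp (-(16 * (α * n) / 17)) * α ^ n ≤ exp (-(α * n / 8)) * exp (-(32 * n / 15)) := by
  rw [← exp_log (pow_pos (by linarith) n : 0 < α ^ n), log_pow, ← exp_add, ← exp_add, exp_le_exp]
  nlinarith [mul_le_mul_of_nonneg_left (log_add_le_of_five_le hα) (Nat.cast_nonneg n : (0 : ℝ) ≤ n)]

def superlevelTimes (f : ℝ → ℝ) (c : ℝ) : Set ℝ := {s | 0 < s ∧ exp (-c) * f 0 ≤ f s}

theorem superlevelTimes_eq_Ioi_of_apply_zero_eq_zero {f : ℝ → ℝ} {c : ℝ}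
    (hf_nonneg : ∀ t, 0 ≤ t → 0 ≤ f t) (h0 : f 0 = 0) : superlevelTimes f c = Ioi 0 := by
  ext s
  simp only [superlevelTimes, h0, mul_zero, mem_ofPred_eq, mem_Ioi, and_iff_left_iff_imp]
  exact fun hs => hf_nonneg s hs.le

namespace LogConcaveOnNonneg

variable {f : ℝ → ℝ} {c s t u : ℝ}

theorem div_rpow_le (hf : LogConcaveOnNonneg f) (hf0 : 0 < f 0) (hs : 0 ≤ s) (hfs : 0 ≤ f s)
    {l : ℝ} (hl0 : 0 < l) (hl1 : l < 1) : (f s / f 0) ^ l ≤ f (l * s) / f 0 := by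
  have key := hf s hs 0 le_rfl l hl0 hl1
  rw [mul_zero, add_zero] at key
  rw [div_rpow hfs hf0.le, div_le_div_iff₀ (rpow_pos_of_pos hf0 l) hf0]
  calc f s ^ l * f 0 = f s ^ l * f 0 ^ (1 - l) * f 0 ^ l := by
        rw [mul_assoc, ← rpow_add hf0, sub_add_cancel, rpow_one]
    _ ≤ f (l * s) * f 0 ^ l := by gcongr

theorem exp_neg_mul_div_mul_le (hf : LogConcaveOnNonneg f) (hf0 : 0 < f 0) (ht : 0 < t)
    (hts : t < s) (hfs : exp (-c) * f 0 ≤ f s) : exp (-(c * (t / s))) * f 0 ≤ f t := by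
  have hs : 0 < s := ht.trans hts
  have hl0 : 0 < t / s := div_pos ht hs
  have hfs' : exp (-c) ≤ f s / f 0 := (le_div_iff₀ hf0).2 hfs
  have key := hf.div_rpow_le hf0 hs.le ((by positivity : 0 ≤ exp (-c) * f 0).trans hfs) hl0
    ((div_lt_one hs).2 hts)
  rw [div_mul_cancel₀ t hs.ne'] at key
  rw [← le_div_iff₀ hf0, ← neg_mul, exp_mul]
  exact (rpow_le_rpow (exp_pos _).le hfs' hl0.le).trans key

theorem le_exp_neg_mul_div_mul (hf : LogConcaveOnNonneg f) (hf0 : 0 < f 0) (hft : 0 ≤ f t)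
    (hu : 0 < u) (hut : u < t) (hfu : f u ≤ exp (-c) * f 0) : f t ≤ exp (-(c * (t / u))) * f 0 := by
  have ht : 0 < t := hu.trans hut
  have hl0 : 0 < u / t := div_pos hu ht
  have key := hf.div_rpow_le hf0 ht.le hft hl0 ((div_lt_one ht).2 hut)
  rw [div_mul_cancel₀ u ht.ne'] at key
  rw [← div_le_iff₀ hf0, ← rpow_le_rpow_iff (div_nonneg hft hf0.le) (exp_pos _).le hl0,
    ← exp_mul, show -(c * (t / u)) * (u / t) = -c by field_simp]
  exact key.trans ((div_le_iff₀ hf0).2 hfu)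

theorem le_exp_neg_mul_div_mul_of_forall_lt {v : ℝ} (hf : LogConcaveOnNonneg f)
    (hf_nonneg : ∀ t, 0 ≤ t → 0 ≤ f t) (hf0 : 0 < f 0) (hc : 0 ≤ c) (hv : 0 ≤ v) (hvu : v < u)
    (hsmall : ∀ s, v < s → f s ≤ exp (-c) * f 0) (hvt : v < t) :
    f t ≤ exp (-(c * (t / u))) * f 0 := by
  have hu : 0 < u := hv.trans_lt hvu
  rcases le_or_gt t u with htu | hut
  · refine (hsmall t hvt).trans (mul_le_mul_of_nonneg_right (exp_le_exp.2 ?_) hf0.le)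
    exact neg_le_neg (mul_le_of_le_one_right hc ((div_le_one hu).2 htu))
  · exact hf.le_exp_neg_mul_div_mul hf0 (hf_nonneg t (hv.trans hvt.le)) hu hut (hsmall u hvu)

theorem eq_zero_of_superlevelTimes_eq_empty (hf : LogConcaveOnNonneg f)
    (hf_nonneg : ∀ t, 0 ≤ t → 0 ≤ f t) (hc : 0 < c) (hS : superlevelTimes f c = ∅) (ht : 0 < t) :
    f t = 0 := by
  have hf0 : 0 < f 0 := (hf_nonneg 0 le_rfl).lt_of_ne' fun h0 => by
    simp [superlevelTimes_eq_Ioi_of_apply_zero_eq_zero hf_nonneg h0] at hS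
  have hsmall : ∀ s, 0 < s → f s ≤ exp (-c) * f 0 := fun s hs => not_lt.1 fun h =>
    hS.subset ⟨hs, h.le⟩
  have hbound : ∀ k : ℕ, f t ≤ exp (-(c * (k + 1))) * f 0 := fun k => by
    have := hf.le_exp_neg_mul_div_mul_of_forall_lt hf_nonneg hf0 hc.le le_rfl
      (show 0 < t / (k + 1) by positivity) hsmall ht
    rwa [div_div_cancel₀ ht.ne'] at this
  have hlim : Tendsto (fun k : ℕ => exp (-(c * (k + 1))) * f 0) atTop (nhds 0) := by
    have hlin : Tendsto (fun k : ℕ => c * ((k : ℝ) + 1)) atTop atTop :=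
      (tendsto_natCast_atTop_atTop.atTop_add tendsto_const_nhds).const_mul_atTop hc
    simpa using (tendsto_exp_neg_atTop_nhds_zero.comp hlin).mul_const (f 0)
  exact le_antisymm (ge_of_tendsto' hlim hbound) (hf_nonneg t ht.le)

theorem pow_succ_mul_le_setIntegral_Ioc (hf : LogConcaveOnNonneg f) (hf0 : 0 < f 0) (hc : 0 ≤ c)
    (m : ℕ) {a : ℝ} (ha : 0 < a) (has : 2 * a < s) (hfs : exp (-c) * f 0 ≤ f s)
    (hint : IntegrableOn (fun t => t ^ m * f t) (Ioc a (2 * a))) :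
    a ^ (m + 1) * (exp (-(c * (2 * a / s))) * f 0) ≤ ∫ t in Ioc a (2 * a), t ^ m * f t := by
  have hs : 0 < s := by linarith
  have hvol : ∫ _ in Ioc a (2 * a), a ^ m * (exp (-(c * (2 * a / s))) * f 0) =
      a ^ (m + 1) * (exp (-(c * (2 * a / s))) * f 0) := by
    rw [setIntegral_const, measureReal_def, Real.volume_Ioc, ENNReal.toReal_ofReal (by linarith),
      smul_eq_mul, pow_succ]
    ring
  rw [← hvol]
  refine setIntegral_mono_on (integrableOn_const measure_Ioc_lt_top.ne) hint measurableSet_Ioc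
    fun t ⟨hat, hta⟩ => ?_
  have hexp : exp (-(c * (2 * a / s))) * f 0 ≤ exp (-(c * (t / s))) * f 0 := by
    gcongr
  exact mul_le_mul (pow_le_pow_left₀ ha.le hat.le m)
    (hexp.trans (hf.exp_neg_mul_div_mul_le hf0 (ha.trans hat) (by linarith) hfs))
    (by positivity) (pow_nonneg (ha.trans hat).le m)

theorem div_pow_mul_exp_le_setIntegral_Ioc (hf : LogConcaveOnNonneg f)
    (hf_nonneg : ∀ t, 0 ≤ t → 0 ≤ f t) (hf0 : 0 < f 0) {n : ℕ} (hn : 1 ≤ n) {α T : ℝ}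
    (hα : 5 ≤ α) (hT : 0 < T) (hTs : 15 * T / 16 < s) (hfs : exp (-(α * n)) * f 0 ≤ f s)
    (hint : IntegrableOn (fun t => t ^ (n - 1) * f t) (Ioc 0 T)) :
    (T / α) ^ n * (exp (-(32 * n / 15)) * f 0) ≤ ∫ t in Ioc 0 T, t ^ (n - 1) * f t := by
  have ha : 0 < T / α := div_pos hT (by linarith)
  have h2a : 2 * (T / α) ≤ 2 * T / 5 := by rw [mul_div_assoc]; gcongr
  have hexp : α * n * (2 * (T / α) / s) ≤ 32 * n / 15 := by
    rw [show α * n * (2 * (T / α) / s) = 2 * n * T / s by field_simp,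
      div_le_div_iff₀ (by linarith) (by norm_num)]
    nlinarith [(Nat.cast_nonneg n : (0 : ℝ) ≤ n)]
  calc (T / α) ^ n * (exp (-(32 * n / 15)) * f 0)
      ≤ (T / α) ^ (n - 1 + 1) * (exp (-(α * n * (2 * (T / α) / s))) * f 0) := by
        rw [Nat.sub_add_cancel hn]; gcongr
    _ ≤ ∫ t in Ioc (T / α) (2 * (T / α)), t ^ (n - 1) * f t :=
        hf.pow_succ_mul_le_setIntegral_Ioc hf0 (by positivity) _ ha (by linarith) hfs
          (hint.mono_set (Ioc_subset_Ioc ha.le (by linarith)))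
    _ ≤ ∫ t in Ioc 0 T, t ^ (n - 1) * f t := by
        refine setIntegral_mono_set hint ?_ (Ioc_subset_Ioc ha.le (by linarith)).eventuallyLE
        filter_upwards [ae_restrict_mem measurableSet_Ioc] with t ht
        exact mul_nonneg (pow_nonneg ht.1.le _) (hf_nonneg t ht.1.le)

theorem one_sub_exp_mul_setIntegral_Ioi_le_setIntegral_Ioc_sSup (hf : LogConcaveOnNonneg f)
    (hf_nonneg : ∀ t, 0 ≤ t → 0 ≤ f t) (hf_int : IntegrableOn f (Ioi 0)) {n : ℕ} (hn : 1 ≤ n)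
    {α : ℝ} (hα : 5 ≤ α) (hne : (superlevelTimes f (α * n)).Nonempty)
    (hbdd : BddAbove (superlevelTimes f (α * n))) :
    (1 - exp (-(α * n / 8))) * ∫ t in Ioi 0, t ^ (n - 1) * f t ≤
      ∫ t in Ioc 0 (sSup (superlevelTimes f (α * n))), t ^ (n - 1) * f t := by
  set c := α * n
  set T := sSup (superlevelTimes f c)
  have hc : 5 * (n : ℝ) ≤ c := by nlinarith [(Nat.cast_nonneg n : (0 : ℝ) ≤ n)]
  have hm : ((n - 1 : ℕ) : ℝ) + 1 = n := by rw [Nat.cast_sub hn, Nat.cast_one, sub_add_cancel]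
  have hf0 : 0 < f 0 := (hf_nonneg 0 le_rfl).lt_of_ne' fun h0 =>
    not_bddAbove_Ioi (0 : ℝ) (superlevelTimes_eq_Ioi_of_apply_zero_eq_zero hf_nonneg h0 ▸ hbdd)
  have hT : 0 < T := hne.some_mem.1.trans_le (le_csSup hbdd hne.some_mem)
  have hsmall : ∀ s, T < s → f s ≤ exp (-c) * f 0 := fun s hTs =>
    not_lt.1 fun h => hTs.not_ge (le_csSup hbdd ⟨hT.trans hTs, h.le⟩)
  set β := 16 * c / (17 * T)
  have hβT : β * T = 16 * c / 17 := by simp only [β]; field_simp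
  have hdecay : ∀ t, T < t → f t ≤ f 0 * exp (-(β * t)) := fun t hTt => by
    have hft := hf.le_exp_neg_mul_div_mul_of_forall_lt hf_nonneg hf0 (by positivity) hT.le
      (show T < 17 * T / 16 by linarith) hsmall hTt
    rwa [show c * (t / (17 * T / 16)) = β * t by simp only [β]; field_simp, mul_comm] at hft
  have hf_pos : ∀ t, T < t → 0 ≤ f t := fun t hTt => hf_nonneg t (hT.trans hTt).le
  have hint_head : IntegrableOn (fun t => t ^ (n - 1) * f t) (Ioc 0 T) :=
    (hf_int.mono_set Ioc_subset_Ioi_self).continuousOn_mul_of_subset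
      (continuous_pow _).continuousOn isCompact_Icc measurableSet_Ioc Ioc_subset_Icc_self
  have hint_tail : IntegrableOn (fun t => t ^ (n - 1) * f t) (Ioi T) :=
    integrableOn_Ioi_pow_mul_of_le_mul_exp _ hT (by linarith)
      (hf_int.mono_set (Ioi_subset_Ioi hT.le)).aestronglyMeasurable hf_pos hdecay
  obtain ⟨s, hs, hTs⟩ := exists_lt_of_lt_csSup hne (show 15 * T / 16 < T by linarith)
  have hratio : ∫ t in Ioi T, t ^ (n - 1) * f t ≤
      exp (-(c / 8)) * ∫ t in Ioc 0 T, t ^ (n - 1) * f t := by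
    calc ∫ t in Ioi T, t ^ (n - 1) * f t ≤ f 0 * (T ^ n * exp (-(16 * c / 17))) := by
          have h := setIntegral_Ioi_pow_mul_le_of_le_mul_exp (n - 1) hT (by linarith) hf0.le
            hf_pos hdecay
          rwa [Nat.sub_add_cancel hn, hβT] at h
      _ = f 0 * (T / α) ^ n * (exp (-(16 * c / 17)) * α ^ n) := by
          rw [div_pow]; field_simp
      _ ≤ f 0 * (T / α) ^ n * (exp (-(c / 8)) * exp (-(32 * n / 15))) :=
          mul_le_mul_of_nonneg_left (exp_neg_mul_pow_le hα n) (by positivity)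
      _ = exp (-(c / 8)) * ((T / α) ^ n * (exp (-(32 * n / 15)) * f 0)) := by ring
      _ ≤ exp (-(c / 8)) * ∫ t in Ioc 0 T, t ^ (n - 1) * f t := by
          gcongr
          exact hf.div_pow_mul_exp_le_setIntegral_Ioc hf_nonneg hf0 hn hα hT hTs hs.2 hint_head
  have htail_nonneg : 0 ≤ ∫ t in Ioi T, t ^ (n - 1) * f t :=
    setIntegral_nonneg measurableSet_Ioi fun t hTt =>
      mul_nonneg (pow_nonneg (hT.trans hTt).le _) (hf_pos t hTt)
  rw [← Ioc_union_Ioi_eq_Ioi hT.le,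
    setIntegral_union (Ioc_disjoint_Ioi le_rfl) measurableSet_Ioi hint_head hint_tail]
  nlinarith [exp_pos (-(c / 8))]

end LogConcaveOnNonneg

/-- Klartag, Lemma 5.2: for a log-concave `f : [0,∞) → [0,∞)` with finite integral and
`t₀ = sup{t > 0 : f(t) ≥ e^{−αn} f(0)}` (computed in the extended reals, so that an unbounded
set has supremum `∞`), one has
`∫₀^{t₀} t^{n−1} f(t) dt ≥ (1 − e^{−αn/8}) ∫₀^∞ t^{n−1} f(t) dt`. -/
theorem mass_up_to_sublevel_sup
    (n : ℕ) (hn : 2 ≤ n) (α : ℝ) (hα : 5 ≤ α)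
    (f : ℝ → ℝ) (hf_nonneg : ∀ t : ℝ, 0 ≤ t → 0 ≤ f t)
    (hf_lc : LogConcaveOnNonneg f) (hf_int : IntegrableOn f (Set.Ioi 0)) :
    (1 - Real.exp (-(α * n / 8))) * ∫ t in Set.Ioi (0 : ℝ), t ^ (n - 1) * f t ≤
      ∫ t in {t : ℝ | 0 < t ∧ (t : EReal) ≤
          sSup (Real.toEReal '' {s : ℝ | 0 < s ∧ Real.exp (-(α * n)) * f 0 ≤ f s})},
        t ^ (n - 1) * f t := by
  change _ ≤ ∫ t in {t : ℝ | 0 < t ∧ (t : EReal) ≤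
    sSup (Real.toEReal '' superlevelTimes f (α * n))}, t ^ (n - 1) * f t
  have hc : 0 < α * n := by positivity
  rcases (superlevelTimes f (α * n)).eq_empty_or_nonempty with hS | hS
  · have hf_zero : ∫ t in Ioi 0, t ^ (n - 1) * f t = 0 :=
      setIntegral_eq_zero_of_forall_eq_zero fun t ht => by
        rw [hf_lc.eq_zero_of_superlevelTimes_eq_empty hf_nonneg hc hS ht, mul_zero]
    simp [hS, hf_zero]
  by_cases hbdd : BddAbove (superlevelTimes f (α * n))
  · rw [setOf_pos_coe_le_sSup_image_of_bddAbove hS hbdd]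
    exact hf_lc.one_sub_exp_mul_setIntegral_Ioi_le_setIntegral_Ioc_sSup hf_nonneg hf_int
      (by omega) hα hS hbdd
  · rw [setOf_pos_coe_le_sSup_image_of_not_bddAbove hbdd]
    have hI : 0 ≤ ∫ t in Ioi 0, t ^ (n - 1) * f t := setIntegral_nonneg measurableSet_Ioi
      fun t ht => mul_nonneg (pow_nonneg ht.le _) (hf_nonneg t ht.le)
    nlinarith [exp_pos (-(α * n / 8))]
end
end

section
/- Let n ≥ 2 be an integer, let α ≥ 5, and let f: ℝⁿ → [0,∞) be a log-concave function with ∫_{ℝⁿ} f = 1. Denote K = { x ∈ ℝⁿ : f(x) ≥ e^{−αn} f(0) }. Then ∫_K f(x) dx ≥ 1 − e^{−αn/8}. -/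
open MeasureTheory Real Set Filter
open scoped ENNReal NNReal RealInnerProductSpace

noncomputable section

/-!
Log-concavity at `λ = 1/2` between `x` and `0` gives `√(f x) √(f 0) ≤ f (x/2)`. Hence wherever
`f x ≤ δ² f 0` we get `f x ≤ √(f x) δ √(f 0) ≤ δ f (x/2)`, so the mass of `f` outside the
super-level set `{f ≥ δ² f 0}` is at most `δ ∫ f (x/2) dx = δ 2ⁿ`. With `δ = e^{-αn/2}` this is at
most `e^{-αn/2} eⁿ ≤ e^{-αn/8}`.
-/

theorem LogConcave.le_mul_apply_inv_two_smul {E : Type*} [AddCommGroup E] [Module ℝ E]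
    {f : E → ℝ} (hf : LogConcave f) (hf_nonneg : ∀ x, 0 ≤ f x) {δ : ℝ} (hδ : 0 ≤ δ) {x : E}
    (hx : f x ≤ δ ^ 2 * f 0) :
    f x ≤ δ * f ((2 : ℝ)⁻¹ • x) := by
  have hsqrt : √(f x) ≤ δ * √(f 0) := by
    simpa [Real.sqrt_mul (sq_nonneg δ), Real.sqrt_sq hδ] using Real.sqrt_le_sqrt hx
  have hmid : √(f x) * √(f 0) ≤ f ((2 : ℝ)⁻¹ • x) := by
    have := hf x 0 (1 / 2) (by norm_num) (by norm_num)
    rwa [smul_zero, add_zero, show (1 : ℝ) - 1 / 2 = 1 / 2 by norm_num,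
      ← Real.sqrt_eq_rpow, ← Real.sqrt_eq_rpow, one_div] at this
  calc f x = √(f x) * √(f x) := (Real.mul_self_sqrt (hf_nonneg x)).symm
    _ ≤ √(f x) * (δ * √(f 0)) := by gcongr
    _ = δ * (√(f x) * √(f 0)) := by ring
    _ ≤ δ * f ((2 : ℝ)⁻¹ • x) := by gcongr

theorem LogConcave.setIntegral_lt_sq_mul_apply_zero_le {E : Type*} [NormedAddCommGroup E]
    [NormedSpace ℝ E] [FiniteDimensional ℝ E] [MeasurableSpace E] [BorelSpace E]
    (μ : Measure E) [μ.IsAddHaarMeasure] {f : E → ℝ} (hf : LogConcave f)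
    (hf_nonneg : ∀ x, 0 ≤ f x) (hf_int : Integrable f μ) {δ : ℝ} (hδ : 0 ≤ δ) :
    ∫ x in {x | f x < δ ^ 2 * f 0}, f x ∂μ ≤ δ * 2 ^ Module.finrank ℝ E * ∫ x, f x ∂μ := by
  have hf_half : Integrable (fun x ↦ f ((2 : ℝ)⁻¹ • x)) μ := hf_int.comp_smul (by norm_num)
  calc ∫ x in {x | f x < δ ^ 2 * f 0}, f x ∂μ
      ≤ ∫ x in {x | f x < δ ^ 2 * f 0}, δ * f ((2 : ℝ)⁻¹ • x) ∂μ :=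
        setIntegral_mono_on_ae₀ hf_int.integrableOn (hf_half.const_mul δ).integrableOn
          (nullMeasurableSet_lt hf_int.aemeasurable aemeasurable_const)
          (ae_of_all _ fun x hx ↦ hf.le_mul_apply_inv_two_smul hf_nonneg hδ hx.le)
    _ ≤ ∫ x, δ * f ((2 : ℝ)⁻¹ • x) ∂μ :=
        setIntegral_le_integral (hf_half.const_mul δ)
          (ae_of_all _ fun x ↦ mul_nonneg hδ (hf_nonneg _))
    _ = δ * 2 ^ Module.finrank ℝ E * ∫ x, f x ∂μ := by
        rw [integral_const_mul, Measure.integral_comp_inv_smul_of_nonneg μ f zero_le_two,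
          smul_eq_mul, mul_assoc]

theorem exp_neg_mul_div_two_mul_two_pow_le (n : ℕ) {α : ℝ} (hα : 8 / 3 ≤ α) :
    exp (-(α * n / 2)) * 2 ^ n ≤ exp (-(α * n / 8)) := by
  have h2 : (2 : ℝ) ^ n ≤ exp n := by
    rw [← exp_one_pow]
    exact pow_le_pow_left₀ (by norm_num) (by linarith [add_one_le_exp (1 : ℝ)]) n
  calc exp (-(α * n / 2)) * 2 ^ n ≤ exp (-(α * n / 2)) * exp n := by gcongr
    _ = exp (-(α * n / 2) + n) := (exp_add _ _).symm
    _ ≤ exp (-(α * n / 8)) := by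
        gcongr
        nlinarith [(Nat.cast_nonneg n : (0 : ℝ) ≤ n)]

theorem superlevel_set_mass_general
    (n : ℕ) (α : ℝ) (hα : 5 ≤ α)
    (f : EuclideanSpace ℝ (Fin n) → ℝ)
    (hf_nonneg : ∀ x, 0 ≤ f x) (hf_lc : LogConcave f)
    (hf_int : Integrable f) (hf_mass : ∫ x, f x = 1) :
    1 - Real.exp (-(α * n / 8)) ≤
      ∫ x in {x : EuclideanSpace ℝ (Fin n) | Real.exp (-(α * n)) * f 0 ≤ f x}, f x := by
  set K := {x : EuclideanSpace ℝ (Fin n) | Real.exp (-(α * n)) * f 0 ≤ f x}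
  have hKc : Kᶜ = {x | f x < exp (-(α * n / 2)) ^ 2 * f 0} := by
    ext x
    simp only [K, mem_compl_iff, mem_ofPred_eq, not_le, ← exp_nat_mul]
    ring_nf
  have hsplit := integral_add_compl₀
    (nullMeasurableSet_le aemeasurable_const hf_int.aemeasurable : NullMeasurableSet K) hf_int
  have htail := hf_lc.setIntegral_lt_sq_mul_apply_zero_le volume hf_nonneg hf_int
    (exp_pos (-(α * n / 2))).le
  rw [← hKc, finrank_euclideanSpace_fin, hf_mass, mul_one] at htail
  linarith [exp_neg_mul_div_two_mul_two_pow_le n (by linarith : 8 / 3 ≤ α)]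

/-- Klartag, Corollary 5.3: for a log-concave probability density `f` on ℝⁿ and `α ≥ 5`, the
super-level set `K = {x : f(x) ≥ e^{−αn} f(0)}` carries almost all mass:
`∫_K f ≥ 1 − e^{−αn/8}`. -/
theorem superlevel_set_mass
    (n : ℕ) (hn : 2 ≤ n) (α : ℝ) (hα : 5 ≤ α)
    (f : EuclideanSpace ℝ (Fin n) → ℝ)
    (hf_nonneg : ∀ x, 0 ≤ f x) (hf_lc : LogConcave f)
    (hf_int : Integrable f) (hf_mass : ∫ x, f x = 1) :
    1 - Real.exp (-(α * n / 8)) ≤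
      ∫ x in {x : EuclideanSpace ℝ (Fin n) | Real.exp (-(α * n)) * f 0 ≤ f x}, f x :=
  superlevel_set_mass_general n α hα f hf_nonneg hf_lc hf_int hf_mass
end
end
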